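/- Let α and β be ordered probability vectors of the same length d with all entries positive, satisfying α₁ < β₁ and α_d < β_d. Then for every probability vector c of length m with all entries positive, the sorted product vectors α ⊗ c and β ⊗ c are majorization-incomparable: neither is majorized by the other. (Equivalently, no entanglement catalyst can make such a pair of incomparable pure states deterministically interconvertible under LOCC.) -/

import Mathlib

/-!
Let `γ`, `δ` be the sorted entries of `α ⊗ c` and `β ⊗ c`. The top entry of `γ` is some `a * b`
with `a ≤ α₁` and `b ∈ c`, so it is `< β₁ * b ≤ δ₁`: the first partial sums rule out `δ ≼ γ`.
Dually the bottom entry of `δ` exceeds that of `γ`, and as both vectors have the same length and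
total mass, the partial sums omitting the last entry rule out `γ ≼ δ`.
-/

/-- All pairwise products of entries of two vectors (unsorted). -/
def tensorList (l₁ l₂ : List ℝ) : List ℝ :=
  l₁.flatMap fun x => l₂.map fun y => x * y

/-- Sum of the first `k` entries (zero padding beyond the length is implicit). -/
def partSum (l : List ℝ) (k : ℕ) : ℝ := (l.take k).sum

/-- `l₁` is majorized by `l₂` (for nonincreasing lists, after zero padding). -/
def MajLe (l₁ l₂ : List ℝ) : Prop := ∀ k : ℕ, partSum l₁ k ≤ partSum l₂ k

lemma mem_tensorList {l₁ l₂ : List ℝ} {x : ℝ} :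
    x ∈ tensorList l₁ l₂ ↔ ∃ a ∈ l₁, ∃ b ∈ l₂, x = a * b := by
  simp [tensorList, eq_comm]

lemma length_tensorList (l₁ l₂ : List ℝ) :
    (tensorList l₁ l₂).length = l₁.length * l₂.length := by
  simp [tensorList, List.length_flatMap]

lemma sum_tensorList (l₁ l₂ : List ℝ) : (tensorList l₁ l₂).sum = l₁.sum * l₂.sum := by
  induction l₁ with
  | nil => simp [tensorList]
  | cons a t ih =>
    simp only [tensorList] at ih ⊢
    simpa [ih, add_mul] using List.sum_map_mul_left l₂ id a

lemma List.getD_zero_eq_head {ι : Type*} {l : List ι} (h : l ≠ []) (x : ι) :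
    l.getD 0 x = l.head h := by
  cases l with
  | nil => contradiction
  | cons a t => rfl

lemma List.getD_length_sub_one_eq_getLast {ι : Type*} {l : List ι} (h : l ≠ []) (x : ι) :
    l.getD (l.length - 1) x = l.getLast h := by
  rw [List.getD_eq_getElem _ _ (by simpa [Nat.pos_iff_ne_zero] using h), List.getLast_eq_getElem]

lemma partSum_one {l : List ℝ} (h : l ≠ []) : partSum l 1 = l.head h := by
  cases l with
  | nil => contradiction
  | cons a t => simp [partSum]

lemma partSum_length_sub_one {l : List ℝ} (h : l ≠ []) :
    partSum l (l.length - 1) = l.sum - l.getLast h := by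
  rw [partSum, eq_sub_iff_add_eq, ← List.dropLast_eq_take]
  simpa using congrArg List.sum (List.dropLast_concat_getLast h)

lemma not_majLe_of_head_lt {l₁ l₂ : List ℝ} (h₁ : l₁ ≠ []) (h₂ : l₂ ≠ [])
    (h : l₂.head h₂ < l₁.head h₁) : ¬ MajLe l₁ l₂ := fun hle => by
  have := hle 1
  rw [partSum_one h₁, partSum_one h₂] at this
  linarith

lemma not_majLe_of_getLast_lt {l₁ l₂ : List ℝ} (h₁ : l₁ ≠ []) (h₂ : l₂ ≠ [])
    (hlen : l₁.length = l₂.length) (hsum : l₁.sum = l₂.sum)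
    (h : l₁.getLast h₁ < l₂.getLast h₂) : ¬ MajLe l₁ l₂ := fun hle => by
  have := hle (l₁.length - 1)
  rw [partSum_length_sub_one h₁, hlen, partSum_length_sub_one h₂, hsum] at this
  linarith

section SortedTensor

variable {α β c γ δ : List ℝ} (hc : ∀ x ∈ c, 0 < x)
  (hγ : γ.Perm (tensorList α c)) (hδ : δ.Perm (tensorList β c))
  (hαne : α ≠ []) (hβne : β ≠ []) (hγne : γ ≠ []) (hδne : δ ≠ [])
include hc hγ hδ

lemma head_lt_head_of_perm_tensorList (hα : α.Pairwise (· ≥ ·)) (hδs : δ.Pairwise (· ≥ ·))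
    (hlt : α.head hαne < β.head hβne) : γ.head hγne < δ.head hδne := by
  obtain ⟨a, ha, b, hb, hab⟩ := mem_tensorList.1 (hγ.subset (List.head_mem hγne))
  calc γ.head hγne = a * b := hab
    _ ≤ α.head hαne * b := mul_le_mul_of_nonneg_right (hα.rel_head ha) (hc b hb).le
    _ < β.head hβne * b := mul_lt_mul_of_pos_right hlt (hc b hb)
    _ ≤ δ.head hδne :=
      hδs.rel_head (hδ.mem_iff.2 (mem_tensorList.2 ⟨_, List.head_mem hβne, b, hb, rfl⟩))

lemma getLast_lt_getLast_of_perm_tensorList (hβ : β.Pairwise (· ≥ ·))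
    (hγs : γ.Pairwise (· ≥ ·)) (hlt : α.getLast hαne < β.getLast hβne) :
    γ.getLast hγne < δ.getLast hδne := by
  obtain ⟨a, ha, b, hb, hab⟩ := mem_tensorList.1 (hδ.subset (List.getLast_mem hδne))
  calc γ.getLast hγne ≤ α.getLast hαne * b :=
        hγs.rel_getLast (hγ.mem_iff.2 (mem_tensorList.2 ⟨_, List.getLast_mem hαne, b, hb, rfl⟩))
    _ < β.getLast hβne * b := mul_lt_mul_of_pos_right hlt (hc b hb)
    _ ≤ a * b := mul_le_mul_of_nonneg_right (hβ.rel_getLast ha) (hc b hb).le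
    _ = δ.getLast hδne := hab.symm

end SortedTensor

theorem no_catalyst_general (d : ℕ) (α β : List ℝ)
    (hαlen : α.length = d) (hβlen : β.length = d)
    (hαsorted : α.Pairwise (· ≥ ·)) (hβsorted : β.Pairwise (· ≥ ·))
    (hαsum : α.sum = 1) (hβsum : β.sum = 1)
    (hfirst : α.getD 0 0 < β.getD 0 0)
    (hlast : α.getD (d - 1) 0 < β.getD (d - 1) 0)
    (c : List ℝ)
    (hcpos : ∀ x ∈ c, 0 < x) (hcsum : c.sum = 1) :
    ∀ γ δ : List ℝ,
      γ.Perm (tensorList α c) → γ.Pairwise (· ≥ ·) →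
      δ.Perm (tensorList β c) → δ.Pairwise (· ≥ ·) →
      ¬ MajLe γ δ ∧ ¬ MajLe δ γ := by
  intro γ δ hγ hγs hδ hδs
  have ne_nil_of_sum_eq_one : ∀ l : List ℝ, l.sum = 1 → l ≠ [] := by rintro _ h rfl; simp at h
  have hγsum : γ.sum = 1 := by rw [hγ.sum_eq, sum_tensorList, hαsum, hcsum, one_mul]
  have hδsum : δ.sum = 1 := by rw [hδ.sum_eq, sum_tensorList, hβsum, hcsum, one_mul]
  have hαne := ne_nil_of_sum_eq_one α hαsum
  have hβne := ne_nil_of_sum_eq_one β hβsum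
  have hγne := ne_nil_of_sum_eq_one γ hγsum
  have hδne := ne_nil_of_sum_eq_one δ hδsum
  have hlen : γ.length = δ.length := by
    rw [hγ.length_eq, hδ.length_eq, length_tensorList, length_tensorList, hαlen, hβlen]
  rw [List.getD_zero_eq_head hαne, List.getD_zero_eq_head hβne] at hfirst
  rw [← hαlen, List.getD_length_sub_one_eq_getLast hαne, hαlen, ← hβlen,
    List.getD_length_sub_one_eq_getLast hβne] at hlast
  exact ⟨not_majLe_of_getLast_lt hγne hδne hlen (hγsum.trans hδsum.symm)
      (getLast_lt_getLast_of_perm_tensorList hcpos hγ hδ hαne hβne hγne hδne hβsorted hγs hlast),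
    not_majLe_of_head_lt hδne hγne
      (head_lt_head_of_perm_tensorList hcpos hγ hδ hαne hβne hγne hδne hαsorted hδs hfirst)⟩

/-- Paper's claim in Section 4.1.2: if `α, β` are ordered probability vectors of the same
length `d` with positive entries, `α₁ < β₁` and `α_d < β_d`, then for every positive
probability vector `c` the sorted product vectors `α ⊗ c` and `β ⊗ c` are
majorization-incomparable: no catalyst can make such a pair interconvertible. -/
theorem no_catalyst (d : ℕ) (hd : 0 < d) (α β : List ℝ)
    (hαlen : α.length = d) (hβlen : β.length = d)
    (hαsorted : α.Pairwise (· ≥ ·)) (hβsorted : β.Pairwise (· ≥ ·))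
    (hαpos : ∀ x ∈ α, 0 < x) (hβpos : ∀ x ∈ β, 0 < x)
    (hαsum : α.sum = 1) (hβsum : β.sum = 1)
    (hfirst : α.getD 0 0 < β.getD 0 0)
    (hlast : α.getD (d - 1) 0 < β.getD (d - 1) 0)
    (m : ℕ) (hm : 0 < m) (c : List ℝ) (hclen : c.length = m)
    (hcpos : ∀ x ∈ c, 0 < x) (hcsum : c.sum = 1) :
    ∀ γ δ : List ℝ,
      γ.Perm (tensorList α c) → γ.Pairwise (· ≥ ·) →
      δ.Perm (tensorList β c) → δ.Pairwise (· ≥ ·) →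
      ¬ MajLe γ δ ∧ ¬ MajLe δ γ :=
  no_catalyst_general d α β hαlen hβlen hαsorted hβsorted hαsum hβsum hfirst hlast c hcpos hcsum
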